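/- The set U = {z = (α, β, M) ∈ Z : |α| < r, |β| < s, f₀(M − Mᵀ)·(α − β) = 0, ‖M₀(z)‖_n < G(z)} is Λ-convex: for all z₁, z₂ ∈ U with z₁ − z₂ ∈ Λ, the segment {z₁ + t(z₂ − z₁) : t ∈ [0,1]} is contained in U. -/

import Mathlib

open Matrix

noncomputable section

/-- Vectors in ℝ³. -/
abbrev V3 := Fin 3 → ℝ
/-- 3×3 real matrices. -/
abbrev Mat3 := Matrix (Fin 3) (Fin 3) ℝ
/-- The state space Z = ℝ³ × ℝ³ × ℝ^{3×3}. -/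
abbrev Z := V3 × V3 × Mat3

/-- Euclidean dot product on ℝ³. -/
def dot3 (u v : V3) : ℝ := ∑ i, u i * v i
/-- Euclidean norm on ℝ³. -/
def norm3 (v : V3) : ℝ := Real.sqrt (dot3 v v)
/-- Outer (tensor) product u ⊗ v. -/
def outer (u v : V3) : Mat3 := Matrix.vecMulVec u v

/-- The constraint set K_{r,s}. -/
def Krs (r s p : ℝ) : Set Z :=
  {z | z.2.2 = outer z.1 z.2.1 + p • (1 : Mat3) ∧ norm3 z.1 = r ∧ norm3 z.2.1 = s}

/-- The wave cone Λ. -/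
def waveCone : Set Z :=
  {z | ∃ (ξ : V3) (c : ℝ), ξ ≠ 0 ∧ z.2.2 *ᵥ ξ + c • z.1 = 0 ∧
    z.2.2ᵀ *ᵥ ξ + c • z.2.1 = 0 ∧ dot3 z.1 ξ = 0 ∧ dot3 z.2.1 ξ = 0}

/-- M₀(z) = α⊗β − M + p·Id. -/
def M0 (p : ℝ) (z : Z) : Mat3 := outer z.1 z.2.1 - z.2.2 + p • (1 : Mat3)

/-- G(z) = √((r² − |α|²)(s² − |β|²)). -/
def Gfun (r s : ℝ) (z : Z) : ℝ :=
  Real.sqrt ((r ^ 2 - norm3 z.1 ^ 2) * (s ^ 2 - norm3 z.2.1 ^ 2))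

/-- Iterated lamination sets K_{r,s}^{Λ,i}. -/
def lamSet (r s p : ℝ) : ℕ → Set Z
  | 0 => Krs r s p
  | (i + 1) => {z | ∃ zb ∈ waveCone, ∃ t₁ t₂ : ℝ, t₁ ≤ 0 ∧ 0 ≤ t₂ ∧
      z + t₁ • zb ∈ lamSet r s p i ∧ z + t₂ • zb ∈ lamSet r s p i}

/-- Nuclear norm: trace of the PSD square root of AᵀA. -/
def nuclearNorm (A : Mat3) : ℝ :=
  (((Matrix.posSemidef_conjTranspose_mul_self A).1.eigenvectorUnitary : Mat3) *
    Matrix.diagonal (Real.sqrt ∘ (Matrix.posSemidef_conjTranspose_mul_self A).1.eigenvalues) *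
    (star (Matrix.posSemidef_conjTranspose_mul_self A).1.eigenvectorUnitary : Mat3)).trace

/-- f₀(A) = (A₂₃, A₃₁, A₁₂) (0-indexed: (A 1 2, A 2 0, A 0 1)). -/
def f0 (A : Mat3) : V3 := ![A 1 2, A 2 0, A 0 1]

/-- Frobenius norm of a matrix. -/
def frobNorm (A : Mat3) : ℝ := Real.sqrt (∑ i, ∑ j, A i j ^ 2)

/-- Λ-convexity of a set. -/
def LambdaConvex (S : Set Z) : Prop :=
  ∀ z₁ ∈ S, ∀ z₂ ∈ S, z₁ - z₂ ∈ waveCone →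
    ∀ t : ℝ, t ∈ Set.Icc (0 : ℝ) 1 → z₁ + t • (z₂ - z₁) ∈ S

/-- The Λ-convex hull of K_{r,s}: the intersection of all Λ-convex sets containing it. -/
def lambdaHull (r s p : ℝ) : Set Z := ⋂₀ {S : Set Z | LambdaConvex S ∧ Krs r s p ⊆ S}

/-! ### Auxiliary lemmas about the nuclear norm -/

def psdSqrt {A : Mat3} (hA : A.PosSemidef) : Mat3 :=
  (hA.1.eigenvectorUnitary : Mat3) * Matrix.diagonal (Real.sqrt ∘ hA.1.eigenvalues) *
    (star hA.1.eigenvectorUnitary : Mat3)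

lemma psdSqrt_psd {A : Mat3} (hA : A.PosSemidef) : (psdSqrt hA).PosSemidef := by
  have hU : (hA.1.eigenvectorUnitary : Mat3) = ((star hA.1.eigenvectorUnitary : Mat3))ᴴ := by
    rw [← star_eq_conjTranspose, star_star]
  unfold psdSqrt
  rw [hU]
  exact (PosSemidef.diagonal (fun i => Real.sqrt_nonneg _)).conjTranspose_mul_mul_same _

lemma psdSqrt_mul_self {A : Mat3} (hA : A.PosSemidef) : psdSqrt hA * psdSqrt hA = A := by
  have hs := hA.1.spectral_theorem
  rw [Unitary.conjStarAlgAut_apply] at hs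
  have h1 := Unitary.coe_star_mul_self hA.1.eigenvectorUnitary
  calc psdSqrt hA * psdSqrt hA
      = (hA.1.eigenvectorUnitary : Mat3) * (Matrix.diagonal (Real.sqrt ∘ hA.1.eigenvalues) *
        ((star hA.1.eigenvectorUnitary : Mat3) * (hA.1.eigenvectorUnitary : Mat3)) *
        Matrix.diagonal (Real.sqrt ∘ hA.1.eigenvalues)) * (star hA.1.eigenvectorUnitary : Mat3) := by
        simp only [psdSqrt]; noncomm_ring
    _ = A := by
      rw [h1, mul_one, diagonal_mul_diagonal]
      conv_rhs => rw [hs]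
      congr 3
      funext i
      simp [Real.mul_self_sqrt (hA.eigenvalues_nonneg i)]


lemma psd_trace_nonneg {A : Mat3} (hA : A.PosSemidef) : 0 ≤ A.trace := by
  have h : ∀ i, 0 ≤ A i i := fun i => by simpa using hA.dotProduct_mulVec_nonneg (Pi.single i 1)
  exact Finset.sum_nonneg fun i _ => h i

lemma psd_trace_mul_nonneg {A B : Mat3} (hA : A.PosSemidef) (hB : B.PosSemidef) :
    0 ≤ (A * B).trace := by
  have h1 : A * B = A * psdSqrt hB * psdSqrt hB := by rw [mul_assoc, psdSqrt_mul_self hB]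
  have h2 : (A * psdSqrt hB * psdSqrt hB).trace = ((psdSqrt hB).conjTranspose * A * psdSqrt hB).trace := by
    rw [trace_mul_cycle, (psdSqrt_psd hB).isHermitian.eq]
  rw [h1, h2]
  exact psd_trace_nonneg (hA.conjTranspose_mul_mul_same _)

theorem nn_key (A : Mat3) :
    (∃ B : Mat3, (1 - Bᴴ * B).PosSemidef ∧ (Bᴴ * A).trace = nuclearNorm A) ∧
    (∀ B : Mat3, (1 - Bᴴ * B).PosSemidef → (Bᴴ * A).trace ≤ nuclearNorm A) := by
  obtain ⟨P, hP, hnn, hP2⟩ : ∃ P : Mat3, P.PosSemidef ∧ nuclearNorm A = P.trace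
      ∧ P * P = Aᴴ * A :=
    ⟨psdSqrt (posSemidef_conjTranspose_mul_self A), psdSqrt_psd (posSemidef_conjTranspose_mul_self A),
      rfl, psdSqrt_mul_self (posSemidef_conjTranspose_mul_self A)⟩
  obtain ⟨V, μ, hμ, hVV, hVV', hspec⟩ : ∃ (V : Mat3) (μ : Fin 3 → ℝ), (∀ i, 0 ≤ μ i)
      ∧ Vᴴ * V = 1 ∧ V * Vᴴ = 1 ∧ P = V * diagonal μ * Vᴴ := by
    refine ⟨(hP.isHermitian.eigenvectorUnitary : Mat3), hP.isHermitian.eigenvalues,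
      hP.eigenvalues_nonneg, ?_, ?_, ?_⟩
    · rw [← Matrix.star_eq_conjTranspose]
      exact mem_unitaryGroup_iff'.mp hP.isHermitian.eigenvectorUnitary.2
    · rw [← Matrix.star_eq_conjTranspose]
      exact mem_unitaryGroup_iff.mp hP.isHermitian.eigenvectorUnitary.2
    · have := hP.isHermitian.spectral_theorem
      simpa [RCLike.ofReal_real_eq_id, Matrix.star_eq_conjTranspose] using this
  set conj : (Fin 3 → ℝ) → Mat3 := fun d => V * diagonal d * Vᴴ with hconjdef
  have hconjmul : ∀ d e, conj d * conj e = conj (d * e) := by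
    intro d e
    simp only [hconjdef]
    rw [show V * diagonal d * Vᴴ * (V * diagonal e * Vᴴ)
        = V * (diagonal d * (Vᴴ * V) * diagonal e) * Vᴴ by noncomm_ring,
      hVV, mul_one, diagonal_mul_diagonal]
    rfl
  have hconjT : ∀ d, (conj d)ᴴ = conj d := by
    intro d
    simp [hconjdef, conjTranspose_mul, diagonal_conjTranspose, mul_assoc,
      show star d = d from funext fun i => star_trivial _]
  have hconjtr : ∀ d, (conj d).trace = ∑ i, d i := by
    intro d
    rw [hconjdef, trace_mul_cycle, hVV, one_mul, trace_diagonal]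
  have hconjpsd : ∀ d, (∀ i, 0 ≤ d i) → (conj d).PosSemidef := by
    intro d hd
    have : (conj d) = (Vᴴ)ᴴ * diagonal d * Vᴴ := by rw [hconjdef, conjTranspose_conjTranspose]
    rw [this]
    exact (PosSemidef.diagonal hd).conjTranspose_mul_mul_same _
  have hconj1 : conj (1 : Fin 3 → ℝ) = 1 := by
    show V * diagonal 1 * Vᴴ = 1
    rw [Pi.one_def, diagonal_one, mul_one, hVV']
  have hPconj : P = conj μ := hspec
  have hAA : Aᴴ * A = conj (μ * μ) := by rw [← hP2, hPconj, hconjmul]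
  set g : Fin 3 → ℝ := fun i => if μ i = 0 then 0 else (μ i)⁻¹ with hgdef
  set ind : Fin 3 → ℝ := fun i => if μ i = 0 then 0 else 1 with hinddef
  -- pointwise function identities
  have hgind : g * μ = ind := by
    funext i; simp only [hgdef, hinddef, Pi.mul_apply]
    by_cases h : μ i = 0 <;> simp [h, inv_mul_cancel₀]
  have hf1 : ind * (μ * μ) * ind = μ * μ := by
    funext i; simp only [hinddef, Pi.mul_apply]
    by_cases h : μ i = 0 <;> simp [h]
  have hf2 : ind * (μ * μ) = μ * μ := by
    funext i; simp only [hinddef, Pi.mul_apply]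
    by_cases h : μ i = 0 <;> simp [h]
  have hf3 : (μ * μ) * ind = μ * μ := by
    funext i; simp only [hinddef, Pi.mul_apply]
    by_cases h : μ i = 0 <;> simp [h]
  have hf4 : g * (μ * μ) * g = ind := by
    funext i; simp only [hgdef, hinddef, Pi.mul_apply]
    by_cases h : μ i = 0
    · simp [h]
    · simp only [if_neg h]; field_simp
  have hf5 : g * (μ * μ) = μ := by
    funext i; simp only [hgdef, Pi.mul_apply]
    by_cases h : μ i = 0
    · simp [h]
    · simp only [if_neg h]; field_simp
  have hf6 : g * (μ * μ) * ind = μ := by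
    rw [hf5]; funext i; simp only [hinddef, Pi.mul_apply]
    by_cases h : μ i = 0 <;> simp [h]
  set X : Mat3 := conj g with hXdef
  set Pi' : Mat3 := conj ind with hPidef
  have hXP : X * P = Pi' := by rw [hXdef, hPconj, hconjmul, hgind]
  have hAPi : A * Pi' = A := by
    have hzero : (A * Pi' - A)ᴴ * (A * Pi' - A) = 0 := by
      have e1 : Pi'ᴴ * (Aᴴ * A) * Pi' = conj (μ * μ) := by
        rw [hPidef, hconjT, hAA, hconjmul, hconjmul, hf2, hf3]
      have e2 : Pi'ᴴ * (Aᴴ * A) = conj (μ * μ) := by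
        rw [hPidef, hconjT, hAA, hconjmul, hf2]
      have e3 : (Aᴴ * A) * Pi' = conj (μ * μ) := by
        rw [hPidef, hAA, hconjmul, hf3]
      calc (A * Pi' - A)ᴴ * (A * Pi' - A)
          = Pi'ᴴ * (Aᴴ * A) * Pi' - Pi'ᴴ * (Aᴴ * A) - (Aᴴ * A) * Pi' + Aᴴ * A := by
            simp only [conjTranspose_sub, conjTranspose_mul, sub_mul, mul_sub]
            noncomm_ring
        _ = 0 := by rw [e1, e2, e3, hAA]; abel
    exact sub_eq_zero.mp (conjTranspose_mul_self_eq_zero.mp hzero)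
  constructor
  · -- attainment
    refine ⟨A * X, ?_, ?_⟩
    · have hBB : (A * X)ᴴ * (A * X) = conj ind := by
        calc (A * X)ᴴ * (A * X) = Xᴴ * (Aᴴ * A) * X := by
              simp only [conjTranspose_mul]; noncomm_ring
          _ = conj ind := by rw [hXdef, hconjT, hAA, hconjmul, hconjmul, hf4]
      have h1 : (1 : Mat3) - (A * X)ᴴ * (A * X) = conj (1 - ind) := by
        have hds : diagonal (1 - ind : Fin 3 → ℝ) = diagonal 1 - diagonal ind := by
          ext i j; by_cases h : i = j <;> simp [h]
        rw [hBB, ← hconj1, hconjdef]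
        show V * diagonal 1 * Vᴴ - V * diagonal ind * Vᴴ = V * diagonal (1 - ind) * Vᴴ
        rw [hds]; noncomm_ring
      rw [h1]
      refine hconjpsd _ fun i => ?_
      simp only [hinddef, Pi.sub_apply, Pi.one_apply]
      by_cases h : μ i = 0 <;> simp [h]
    · have hrw : (A * X)ᴴ * A = Xᴴ * (Aᴴ * A) := by
        simp only [conjTranspose_mul]; noncomm_ring
      rw [hrw, hXdef, hconjT, hAA, hconjmul, hf5, hnn, hPconj]
  · -- dual bound
    intro B hB
    have h0 : 0 ≤ ((B - A * X)ᴴ * (B - A * X) * P).trace :=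
      psd_trace_mul_nonneg (posSemidef_conjTranspose_mul_self _) hP
    have hexp : (B - A * X)ᴴ * (B - A * X) * P
        = Bᴴ * B * P - Bᴴ * (A * (X * P)) - Xᴴ * Aᴴ * (B * P) + Xᴴ * (Aᴴ * A) * (X * P) := by
      simp only [conjTranspose_sub, conjTranspose_mul, sub_mul, mul_sub]
      noncomm_ring
    have t2 : Bᴴ * (A * (X * P)) = Bᴴ * A := by rw [hXP, hAPi]
    have t4 : (Xᴴ * (Aᴴ * A) * (X * P)).trace = P.trace := by
      rw [hXP, hXdef, hPidef, hconjT, hAA, hconjmul, hconjmul, hf6, hPconj]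
    have t3 : (Xᴴ * Aᴴ * (B * P)).trace = (Bᴴ * A).trace := by
      have hh : (Xᴴ * Aᴴ * (B * P))ᴴ = Pᴴ * Bᴴ * (A * X) := by
        simp only [conjTranspose_mul, conjTranspose_conjTranspose]
      have h' : (Xᴴ * Aᴴ * (B * P)).trace = (Pᴴ * Bᴴ * (A * X)).trace := by
        rw [← hh, trace_conjTranspose]
        exact star_trivial _
      rw [h', hP.isHermitian.eq, trace_mul_cycle, mul_assoc A X P, hXP, hAPi,
        trace_mul_comm]
    have t1 : (Bᴴ * B * P).trace ≤ P.trace := by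
      have hps := psd_trace_mul_nonneg hB hP
      have hexp2 : (1 - Bᴴ * B) * P = P - Bᴴ * B * P := by noncomm_ring
      rw [hexp2, trace_sub] at hps
      linarith
    rw [hexp] at h0
    simp only [trace_add, trace_sub] at h0
    rw [t2, t4, t3] at h0
    rw [hnn]
    linarith

lemma nn_nonneg (A : Mat3) : 0 ≤ nuclearNorm A :=
  psd_trace_nonneg (psdSqrt_psd (posSemidef_conjTranspose_mul_self A))

lemma nn_add_le (A C : Mat3) : nuclearNorm (A + C) ≤ nuclearNorm A + nuclearNorm C := by
  obtain ⟨⟨B, hB, hBe⟩, _⟩ := nn_key (A + C)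
  have h1 := (nn_key A).2 B hB
  have h2 := (nn_key C).2 B hB
  have hsplit : (Bᴴ * (A + C)).trace = (Bᴴ * A).trace + (Bᴴ * C).trace := by
    rw [mul_add, trace_add]
  linarith [hBe.symm.trans hsplit]

lemma nn_smul_le (c : ℝ) (A : Mat3) : nuclearNorm (c • A) ≤ |c| * nuclearNorm A := by
  obtain ⟨⟨B, hB, hBe⟩, _⟩ := nn_key (c • A)
  set sgn : ℝ := if 0 ≤ c then 1 else -1 with hsgndef
  have hsgn2 : sgn * sgn = 1 := by rw [hsgndef]; split <;> norm_num
  have hsgnc : sgn * c = |c| := by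
    rw [hsgndef]; split
    · rw [abs_of_nonneg ‹_›]; ring
    · rw [abs_of_neg (lt_of_not_ge ‹_›)]; ring
  have hBB' : (1 : Mat3) - (sgn • B)ᴴ * (sgn • B) = 1 - Bᴴ * B := by
    rw [conjTranspose_smul, smul_mul_smul_comm]
    norm_num [hsgn2, star_trivial]
  have hdual := (nn_key A).2 (sgn • B) (hBB' ▸ hB)
  have htr : ((sgn • B)ᴴ * A).trace = sgn * (Bᴴ * A).trace := by
    rw [conjTranspose_smul, smul_mul_assoc, trace_smul]
    simp [star_trivial]
  have htr2 : (Bᴴ * (c • A)).trace = c * (Bᴴ * A).trace := by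
    rw [mul_smul_comm, trace_smul, smul_eq_mul]
  rw [← hBe, htr2]
  have hrw : c * (Bᴴ * A).trace = |c| * (sgn * (Bᴴ * A).trace) := by
    rw [← hsgnc]
    linear_combination (-(c * (Bᴴ * A).trace)) * hsgn2
  rw [hrw]
  have habs : 0 ≤ |c| := abs_nonneg c
  calc |c| * (sgn * (Bᴴ * A).trace) ≤ |c| * nuclearNorm A := by
        apply mul_le_mul_of_nonneg_left _ habs
        rw [← htr]; exact hdual
    _ = |c| * nuclearNorm A := rfl

lemma nn_zero : nuclearNorm (0 : Mat3) = 0 := by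
  obtain ⟨⟨B, hB, hBe⟩, _⟩ := nn_key (0 : Mat3)
  rw [← hBe, mul_zero, trace_zero]

lemma nn_smul (c : ℝ) (A : Mat3) : nuclearNorm (c • A) = |c| * nuclearNorm A := by
  rcases eq_or_ne c 0 with h | h
  · simp [h, nn_zero]
  · refine le_antisymm (nn_smul_le c A) ?_
    have h2 := nn_smul_le c⁻¹ (c • A)
    rw [smul_smul, inv_mul_cancel₀ h, one_smul, abs_inv] at h2
    have hane : |c| ≠ 0 := abs_ne_zero.mpr h
    have h3 := mul_le_mul_of_nonneg_left h2 (abs_nonneg c)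
    rwa [← mul_assoc, mul_inv_cancel₀ hane, one_mul] at h3

lemma nn_sub_le (A C : Mat3) : nuclearNorm (A - C) ≤ nuclearNorm A + nuclearNorm C := by
  have := nn_add_le A (-C)
  rw [← sub_eq_add_neg] at this
  refine this.trans ?_
  have hneg : nuclearNorm (-C) = nuclearNorm C := by
    have h := nn_smul (-1) C
    rw [neg_one_smul, abs_neg, abs_one, one_mul] at h
    exact h
  linarith

lemma nn_rank1_le (u v : Fin 3 → ℝ) :
    nuclearNorm (vecMulVec u v) ≤ Real.sqrt (u ⬝ᵥ u) * Real.sqrt (v ⬝ᵥ v) := by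
  obtain ⟨⟨B, hB, hBe⟩, _⟩ := nn_key (vecMulVec u v)
  rw [← hBe]
  have htr : (Bᴴ * vecMulVec u v).trace = u ⬝ᵥ (B *ᵥ v) := by
    simp only [trace, diag, mul_apply, vecMulVec_apply, conjTranspose_apply, star_trivial,
      dotProduct, mulVec, Finset.mul_sum, Finset.sum_mul]
    rw [Finset.sum_comm]
    apply Finset.sum_congr rfl; intro i _
    apply Finset.sum_congr rfl; intro j _
    ring
  have hBv : (B *ᵥ v) ⬝ᵥ (B *ᵥ v) ≤ v ⬝ᵥ v := by
    have h := hB.dotProduct_mulVec_nonneg v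
    have hexp : star v ⬝ᵥ ((1 - Bᴴ * B) *ᵥ v) = v ⬝ᵥ v - (B *ᵥ v) ⬝ᵥ (B *ᵥ v) := by
      rw [sub_mulVec, dotProduct_sub, one_mulVec, ← mulVec_mulVec, dotProduct_mulVec,
        star_trivial]
      congr 1
      rw [show v ᵥ* Bᴴ = B *ᵥ v by rw [vecMul_conjTranspose]; simp [star_trivial]]
    rw [hexp] at h
    linarith
  have hCS : u ⬝ᵥ (B *ᵥ v) ≤ Real.sqrt (u ⬝ᵥ u) * Real.sqrt ((B *ᵥ v) ⬝ᵥ (B *ᵥ v)) := by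
    set w := B *ᵥ v
    have h1 : (u ⬝ᵥ w) ^ 2 ≤ (u ⬝ᵥ u) * (w ⬝ᵥ w) := by
      have := Finset.sum_mul_sq_le_sq_mul_sq Finset.univ u w
      simpa [dotProduct, pow_two] using this
    calc u ⬝ᵥ w ≤ |u ⬝ᵥ w| := le_abs_self _
      _ = Real.sqrt ((u ⬝ᵥ w) ^ 2) := (Real.sqrt_sq_eq_abs _).symm
      _ ≤ Real.sqrt ((u ⬝ᵥ u) * (w ⬝ᵥ w)) := Real.sqrt_le_sqrt h1
      _ = Real.sqrt (u ⬝ᵥ u) * Real.sqrt (w ⬝ᵥ w) := Real.sqrt_mul (Finset.sum_nonneg fun i _ => mul_self_nonneg (u i)) _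
  rw [htr]
  refine hCS.trans ?_
  have := Real.sqrt_le_sqrt hBv
  have h0 : 0 ≤ Real.sqrt (u ⬝ᵥ u) := Real.sqrt_nonneg _
  exact mul_le_mul_of_nonneg_left this h0


lemma wave_quad {zb : Z} (hz : zb ∈ waveCone) :
    dot3 (f0 (zb.2.2 - zb.2.2ᵀ)) (zb.1 - zb.2.1) = 0 := by
  obtain ⟨ξ, c, hξ, h1, h2, h3, h4⟩ := hz
  obtain ⟨α, β, M⟩ := zb
  simp only at h1 h2 h3 h4 ⊢
  have e0 := congrFun h1 0
  have e1 := congrFun h1 1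
  have e2 := congrFun h1 2
  have f0' := congrFun h2 0
  have f1' := congrFun h2 1
  have f2' := congrFun h2 2
  simp only [Pi.add_apply, Pi.smul_apply, Pi.zero_apply, smul_eq_mul, mulVec, dotProduct,
    Fin.sum_univ_three, transpose_apply] at e0 e1 e2 f0' f1' f2'
  simp only [dot3, Fin.sum_univ_three] at h3 h4
  simp only [dot3, f0, Fin.sum_univ_three, Matrix.sub_apply, transpose_apply, Pi.sub_apply,
    Matrix.cons_val_zero, Matrix.cons_val_one, Matrix.head_cons, Matrix.cons_val_two,
    Matrix.tail_cons]
  rcases eq_or_ne c 0 with hc | hc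
  · subst hc
    simp only [zero_mul, add_zero] at e0 e1 e2 f0' f1' f2'
    have hex : ∃ k, ξ k ≠ 0 := by
      by_contra hcon
      push_neg at hcon
      exact hξ (funext fun k => hcon k)
    obtain ⟨k, hk⟩ := hex
    fin_cases k
    · have hcalc : ξ 0 * ((M 1 2 - M 2 1) * (α 0 - β 0) + (M 2 0 - M 0 2) * (α 1 - β 1)
          + (M 0 1 - M 1 0) * (α 2 - β 2)) = 0 := by
        linear_combination (M 1 2 - M 2 1) * h3 - (M 1 2 - M 2 1) * h4
          - (α 2 - β 2) * e1 + (α 2 - β 2) * f1' + (α 1 - β 1) * e2 - (α 1 - β 1) * f2'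
      exact (mul_eq_zero.mp hcalc).resolve_left hk
    · have hcalc : ξ 1 * ((M 1 2 - M 2 1) * (α 0 - β 0) + (M 2 0 - M 0 2) * (α 1 - β 1)
          + (M 0 1 - M 1 0) * (α 2 - β 2)) = 0 := by
        linear_combination (M 2 0 - M 0 2) * h3 - (M 2 0 - M 0 2) * h4
          + (α 2 - β 2) * e0 - (α 2 - β 2) * f0' - (α 0 - β 0) * e2 + (α 0 - β 0) * f2'
      exact (mul_eq_zero.mp hcalc).resolve_left hk
    · have hcalc : ξ 2 * ((M 1 2 - M 2 1) * (α 0 - β 0) + (M 2 0 - M 0 2) * (α 1 - β 1)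
          + (M 0 1 - M 1 0) * (α 2 - β 2)) = 0 := by
        linear_combination (M 0 1 - M 1 0) * h3 - (M 0 1 - M 1 0) * h4
          - (α 1 - β 1) * e0 + (α 1 - β 1) * f0' + (α 0 - β 0) * e1 - (α 0 - β 0) * f1'
      exact (mul_eq_zero.mp hcalc).resolve_left hk
  · have hcalc : c * ((M 1 2 - M 2 1) * (α 0 - β 0) + (M 2 0 - M 0 2) * (α 1 - β 1)
        + (M 0 1 - M 1 0) * (α 2 - β 2)) = 0 := by
      linear_combination (M 1 2 - M 2 1) * e0 - (M 1 2 - M 2 1) * f0'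
        + (M 2 0 - M 0 2) * e1 - (M 2 0 - M 0 2) * f1'
        + (M 0 1 - M 1 0) * e2 - (M 0 1 - M 1 0) * f2'
    exact (mul_eq_zero.mp hcalc).resolve_left hc

lemma sqrt_two_combo {a b c d : ℝ} (ha : 0 ≤ a) (hb : 0 ≤ b) (hc : 0 ≤ c) (hd : 0 ≤ d) :
    Real.sqrt (a*b) + Real.sqrt (c*d) ≤ Real.sqrt ((a+c)*(b+d)) := by
  rw [show Real.sqrt ((a+c)*(b+d)) = Real.sqrt ((a+c)*(b+d)) from rfl]
  have key : (Real.sqrt (a*b) + Real.sqrt (c*d))^2 ≤ (a+c)*(b+d) := by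
    have s1 : Real.sqrt (a*b) ^ 2 = a*b := Real.sq_sqrt (by positivity)
    have s2 : Real.sqrt (c*d) ^ 2 = c*d := Real.sq_sqrt (by positivity)
    have s3 : Real.sqrt (a*b) * Real.sqrt (c*d) = Real.sqrt (a*d) * Real.sqrt (c*b) := by
      rw [← Real.sqrt_mul (by positivity), ← Real.sqrt_mul (by positivity)]
      congr 1; ring
    have s4 : Real.sqrt (a*d) ^ 2 = a*d := Real.sq_sqrt (by positivity)
    have s5 : Real.sqrt (c*b) ^ 2 = c*b := Real.sq_sqrt (by positivity)
    nlinarith [sq_nonneg (Real.sqrt (a*d) - Real.sqrt (c*b))]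
  calc Real.sqrt (a*b) + Real.sqrt (c*d)
      = Real.sqrt ((Real.sqrt (a*b) + Real.sqrt (c*d))^2) := by
        rw [Real.sqrt_sq (by positivity)]
    _ ≤ Real.sqrt ((a+c)*(b+d)) := Real.sqrt_le_sqrt key

lemma sqrt_three_combo {a b c d e f : ℝ} (ha : 0 ≤ a) (hb : 0 ≤ b) (hc : 0 ≤ c) (hd : 0 ≤ d)
    (he : 0 ≤ e) (hf : 0 ≤ f) :
    Real.sqrt (a*b) + Real.sqrt (c*d) + Real.sqrt (e*f)
      ≤ Real.sqrt ((a+c+e)*(b+d+f)) := by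
  have h1 := sqrt_two_combo ha hb hc hd
  have h2 := sqrt_two_combo (by positivity : (0:ℝ) ≤ a + c) (by positivity : (0:ℝ) ≤ b + d) he hf
  linarith

lemma sqrt_scale {c : ℝ} (hc : 0 ≤ c) (a b : ℝ) :
    Real.sqrt ((c*a)*(c*b)) = c * Real.sqrt (a*b) := by
  rw [show (c*a)*(c*b) = c^2*(a*b) by ring, Real.sqrt_mul (sq_nonneg c), Real.sqrt_sq hc]


theorem stmt17 (r s p : ℝ) (hr : 0 < r) (hs : 0 < s) :
    LambdaConvex {z : Z | norm3 z.1 < r ∧ norm3 z.2.1 < s ∧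
      dot3 (f0 (z.2.2 - z.2.2ᵀ)) (z.1 - z.2.1) = 0 ∧
      nuclearNorm (M0 p z) < Gfun r s z} := by
  intro z₁ hz₁ z₂ hz₂ hwave t ht
  obtain ⟨ht0, ht1⟩ := ht
  rcases eq_or_lt_of_le ht0 with h0 | h0
  · rw [← h0]; simpa using hz₁
  rcases eq_or_lt_of_le ht1 with h1 | h1
  · rw [h1]; simpa using hz₂
  have hQ := wave_quad hwave
  obtain ⟨α₁, β₁, M₁⟩ := z₁
  obtain ⟨α₂, β₂, M₂⟩ := z₂
  obtain ⟨ha1, hb1, hl1, hn1⟩ := hz₁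
  obtain ⟨ha2, hb2, hl2, hn2⟩ := hz₂
  simp only [Set.mem_setOf_eq, Prod.mk_sub_mk] at ha1 hb1 hl1 hn1 ha2 hb2 hl2 hn2 hQ ⊢
  simp only [Prod.mk_add_mk, Prod.smul_mk, Prod.mk_sub_mk]
  set αt : V3 := α₁ + t • (α₂ - α₁) with hαt
  set βt : V3 := β₁ + t • (β₂ - β₁) with hβt
  set Mt : Mat3 := M₁ + t • (M₂ - M₁) with hMt
  have hd : ∀ v : V3, 0 ≤ dot3 v v := fun v => Finset.sum_nonneg fun i _ => mul_self_nonneg _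
  have hsq : ∀ v : V3, norm3 v ^ 2 = dot3 v v := fun v => Real.sq_sqrt (hd v)
  have hlt : ∀ (v : V3) (R : ℝ), 0 < R → (norm3 v < R ↔ dot3 v v < R ^ 2) := by
    intro v R hR
    rw [norm3]
    exact Real.sqrt_lt' hR
  have hquadα : dot3 αt αt = (1 - t) * dot3 α₁ α₁ + t * dot3 α₂ α₂
      - (t - t ^ 2) * dot3 (α₂ - α₁) (α₂ - α₁) := by
    simp only [hαt, dot3, Fin.sum_univ_three, Pi.add_apply, Pi.sub_apply, Pi.smul_apply,
      smul_eq_mul]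
    ring
  have hquadβ : dot3 βt βt = (1 - t) * dot3 β₁ β₁ + t * dot3 β₂ β₂
      - (t - t ^ 2) * dot3 (β₂ - β₁) (β₂ - β₁) := by
    simp only [hβt, dot3, Fin.sum_univ_three, Pi.add_apply, Pi.sub_apply, Pi.smul_apply,
      smul_eq_mul]
    ring
  have htt : 0 < t - t ^ 2 := by nlinarith
  have hαlt : dot3 αt αt < r ^ 2 := by
    rw [hquadα]
    have k1 := (hlt α₁ r hr).mp ha1
    have k2 := (hlt α₂ r hr).mp ha2
    nlinarith [hd (α₂ - α₁)]
  have hβlt : dot3 βt βt < s ^ 2 := by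
    rw [hquadβ]
    have k1 := (hlt β₁ s hs).mp hb1
    have k2 := (hlt β₂ s hs).mp hb2
    nlinarith [hd (β₂ - β₁)]
  refine ⟨(hlt _ _ hr).mpr hαlt, (hlt _ _ hs).mpr hβlt, ?_, ?_⟩
  · -- linear constraint
    simp only [hαt, hβt, hMt, dot3, f0, Fin.sum_univ_three, Matrix.sub_apply,
      Matrix.add_apply, Matrix.smul_apply, transpose_apply, Pi.sub_apply, Pi.add_apply,
      Pi.smul_apply, smul_eq_mul, Matrix.cons_val_zero, Matrix.cons_val_one, Matrix.head_cons,
      Matrix.cons_val_two, Matrix.tail_cons] at hl1 hl2 hQ ⊢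
    linear_combination (1 - t) * hl1 + t * hl2 - (t - t ^ 2) * hQ
  · -- nuclear norm vs G
    have hM0t : M0 p (αt, βt, Mt) = (1 - t) • M0 p (α₁, β₁, M₁) + t • M0 p (α₂, β₂, M₂)
        - (t - t ^ 2) • vecMulVec (α₂ - α₁) (β₂ - β₁) := by
      ext i j
      simp only [M0, outer, vecMulVec_apply, Matrix.add_apply, Matrix.sub_apply,
        Matrix.smul_apply, Pi.add_apply, Pi.sub_apply, Pi.smul_apply, smul_eq_mul,
        hαt, hβt, hMt]
      ring
    set dw : ℝ := dot3 (α₂ - α₁) (α₂ - α₁) with hdw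
    set dx : ℝ := dot3 (β₂ - β₁) (β₂ - β₁) with hdx
    have hnuc : nuclearNorm (M0 p (αt, βt, Mt))
        ≤ (1 - t) * nuclearNorm (M0 p (α₁, β₁, M₁)) + t * nuclearNorm (M0 p (α₂, β₂, M₂))
          + (t - t ^ 2) * (Real.sqrt dw * Real.sqrt dx) := by
      rw [hM0t]
      have s1 := nn_sub_le ((1 - t) • M0 p (α₁, β₁, M₁) + t • M0 p (α₂, β₂, M₂))
        ((t - t ^ 2) • vecMulVec (α₂ - α₁) (β₂ - β₁))
      have s2 := nn_add_le ((1 - t) • M0 p (α₁, β₁, M₁)) (t • M0 p (α₂, β₂, M₂))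
      have s3 := nn_smul (1 - t) (M0 p (α₁, β₁, M₁))
      have s4 := nn_smul t (M0 p (α₂, β₂, M₂))
      have s5 := nn_smul (t - t ^ 2) (vecMulVec (α₂ - α₁) (β₂ - β₁))
      rw [abs_of_nonneg (by linarith : (0:ℝ) ≤ 1 - t)] at s3
      rw [abs_of_nonneg (le_of_lt h0)] at s4
      rw [abs_of_nonneg (le_of_lt htt)] at s5
      have s6 : nuclearNorm (vecMulVec (α₂ - α₁) (β₂ - β₁)) ≤ Real.sqrt dw * Real.sqrt dx :=
        nn_rank1_le (α₂ - α₁) (β₂ - β₁)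
      have s7 : (t - t ^ 2) * nuclearNorm (vecMulVec (α₂ - α₁) (β₂ - β₁))
          ≤ (t - t ^ 2) * (Real.sqrt dw * Real.sqrt dx) :=
        mul_le_mul_of_nonneg_left s6 (le_of_lt htt)
      linarith
    have hA1 : 0 < r ^ 2 - dot3 α₁ α₁ := by have := (hlt α₁ r hr).mp ha1; linarith
    have hA2 : 0 < r ^ 2 - dot3 α₂ α₂ := by have := (hlt α₂ r hr).mp ha2; linarith
    have hB1 : 0 < s ^ 2 - dot3 β₁ β₁ := by have := (hlt β₁ s hs).mp hb1; linarith
    have hB2 : 0 < s ^ 2 - dot3 β₂ β₂ := by have := (hlt β₂ s hs).mp hb2; linarith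
    have hGsplit : ∀ (α β : V3) (M : Mat3), Gfun r s (α, β, M)
        = Real.sqrt ((r ^ 2 - dot3 α α) * (s ^ 2 - dot3 β β)) := by
      intro α β M
      rw [Gfun]
      simp only [hsq]
    have hG : (1 - t) * Gfun r s (α₁, β₁, M₁) + t * Gfun r s (α₂, β₂, M₂)
        + (t - t ^ 2) * (Real.sqrt dw * Real.sqrt dx) ≤ Gfun r s (αt, βt, Mt) := by
      rw [hGsplit, hGsplit, hGsplit]
      have e1 : (1 - t) * Real.sqrt ((r ^ 2 - dot3 α₁ α₁) * (s ^ 2 - dot3 β₁ β₁))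
          = Real.sqrt (((1 - t) * (r ^ 2 - dot3 α₁ α₁)) * ((1 - t) * (s ^ 2 - dot3 β₁ β₁))) :=
        (sqrt_scale (by linarith) _ _).symm
      have e2 : t * Real.sqrt ((r ^ 2 - dot3 α₂ α₂) * (s ^ 2 - dot3 β₂ β₂))
          = Real.sqrt ((t * (r ^ 2 - dot3 α₂ α₂)) * (t * (s ^ 2 - dot3 β₂ β₂))) :=
        (sqrt_scale (le_of_lt h0) _ _).symm
      have e3 : (t - t ^ 2) * (Real.sqrt dw * Real.sqrt dx)
          = Real.sqrt (((t - t ^ 2) * dw) * ((t - t ^ 2) * dx)) := by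
        rw [sqrt_scale (le_of_lt htt), Real.sqrt_mul (hd _)]
      rw [e1, e2, e3]
      have key := sqrt_three_combo
        (mul_nonneg (by linarith : (0:ℝ) ≤ 1 - t) (le_of_lt hA1))
        (mul_nonneg (by linarith : (0:ℝ) ≤ 1 - t) (le_of_lt hB1))
        (mul_nonneg (le_of_lt h0) (le_of_lt hA2)) (mul_nonneg (le_of_lt h0) (le_of_lt hB2))
        (mul_nonneg (le_of_lt htt) (hd (α₂ - α₁))) (mul_nonneg (le_of_lt htt) (hd (β₂ - β₁)))
      refine key.trans (le_of_eq ?_)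
      congr 1
      rw [hquadα, hquadβ, hdw, hdx]
      ring
    have hmid : (1 - t) * nuclearNorm (M0 p (α₁, β₁, M₁)) + t * nuclearNorm (M0 p (α₂, β₂, M₂))
        < (1 - t) * Gfun r s (α₁, β₁, M₁) + t * Gfun r s (α₂, β₂, M₂) := by
      have m1 : (1 - t) * nuclearNorm (M0 p (α₁, β₁, M₁)) < (1 - t) * Gfun r s (α₁, β₁, M₁) :=
        mul_lt_mul_of_pos_left hn1 (by linarith)
      have m2 : t * nuclearNorm (M0 p (α₂, β₂, M₂)) < t * Gfun r s (α₂, β₂, M₂) :=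
        mul_lt_mul_of_pos_left hn2 h0
      linarith
    calc nuclearNorm (M0 p (αt, βt, Mt))
        ≤ (1 - t) * nuclearNorm (M0 p (α₁, β₁, M₁)) + t * nuclearNorm (M0 p (α₂, β₂, M₂))
          + (t - t ^ 2) * (Real.sqrt dw * Real.sqrt dx) := hnuc
      _ < (1 - t) * Gfun r s (α₁, β₁, M₁) + t * Gfun r s (α₂, β₂, M₂)
          + (t - t ^ 2) * (Real.sqrt dw * Real.sqrt dx) := by linarith
      _ ≤ Gfun r s (αt, βt, Mt) := hG
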